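/- (Goldman–Joichi–White) For two Ferrers boards B_1 and B_2, both with n columns, B_1 and B_2 are rook equivalent if and only if the root vector ξ(B_2) is a rearrangement (permutation) of the entries of the root vector ξ(B_1). -/

import Mathlib

/-- A (non-attacking) rook placement on the board with column heights `b`:
a set of cells (column, row) inside the board, no two sharing a column or a row.
Cells are 0-indexed: cell `(i, j)` lies in the board iff `j < b i`. -/
def IsRookPlacement {n : ℕ} (b : Fin n → ℕ) (P : Finset (Fin n × ℕ)) : Prop :=
  (∀ c ∈ P, c.2 < b c.1) ∧
  ∀ c ∈ P, ∀ d ∈ P, c ≠ d → c.1 ≠ d.1 ∧ c.2 ≠ d.2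

/-- The `k`-th rook number of the board `b`: the number of rookPlacements of `k`
non-attacking rooks on `b`. -/
noncomputable def rookNum {n : ℕ} (b : Fin n → ℕ) (k : ℕ) : ℕ :=
  Set.ncard {P : Finset (Fin n × ℕ) | IsRookPlacement b P ∧ P.card = k}

/-- Two boards are rook equivalent if all their rook numbers agree. -/
def RookEquiv {n₁ n₂ : ℕ} (b₁ : Fin n₁ → ℕ) (b₂ : Fin n₂ → ℕ) : Prop :=
  ∀ k, rookNum b₁ k = rookNum b₂ k

/-- The root vector of a board: the (0-indexed) `i`-th entry is `i - b i`
(1-indexed: `(i-1) - b_i`). -/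
def rootVec {n : ℕ} (b : Fin n → ℕ) : Fin n → ℤ := fun i => (i : ℤ) - (b i : ℤ)

/-- `b₁` is obtained from `b₂` by moving `k > 0` squares out of one column into a
single other column: the boards agree except in columns `i` and `j`, where `b₁`
has `k` more squares in column `i` and `k` fewer in column `j`. -/
def MovesSquares {n : ℕ} (b₁ b₂ : Fin n → ℕ) : Prop :=
  ∃ (i j : Fin n) (k : ℕ), i ≠ j ∧ 0 < k ∧ b₁ i = b₂ i + k ∧ b₂ j = b₁ j + k ∧
    ∀ l, l ≠ i → l ≠ j → b₁ l = b₂ l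

/-- A Ferrers board with `n` columns: a weakly increasing sequence of column heights. -/
def FerrersBoard (n : ℕ) : Type := {b : Fin n → ℕ // Monotone b}

/-- The rook equivalence graph of the equivalence class of `B`: vertices are the
Ferrers boards with `n` columns rook equivalent to `B`; two distinct boards are
adjacent when one is obtained from the other by moving squares out of one column
into a single other column. -/
def rookEquivGraph {n : ℕ} (B : FerrersBoard n) :
    SimpleGraph {C : FerrersBoard n // RookEquiv C.1 B.1} :=
  SimpleGraph.fromRel fun C D => MovesSquares C.1.1 D.1.1

/-- `entryCount b k` is `v_k`, the number of entries of the root vector of `b`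
equal to `k`. -/
def entryCount {n : ℕ} (b : Fin n → ℕ) (k : ℕ) : ℕ :=
  (Finset.univ.filter fun l => rootVec b l = (k : ℤ)).card

/-!
Deleting the last column `b'` of a Ferrers board `b` with `n + 1` columns gives
`r_{k+1}(b) = r_{k+1}(b') + r_k(b') (b_{n+1} - k)`: a placement either avoids the last column, or
is a placement of `k` rooks on `b'` plus a rook in the last column, which by monotonicity contains
every row used on `b'`, so exactly `b_{n+1} - k` rows are left for it. By induction on `n` this
recursion is the factorization `∑ₖ r_k(b) (x)_{n-k} = ∏ᵢ (x - ξᵢ(b))`. The falling factorials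
`(x)_m` are linearly independent, so two boards are rook equivalent iff these products agree, that
is, iff their root vectors have the same multiset of entries.
-/

open Finset Polynomial

theorem exists_perm_of_map_univ_eq {α β : Type*} [Fintype α] [DecidableEq β] {f g : α → β}
    (h : univ.val.map f = univ.val.map g) : ∃ σ : Equiv.Perm α, ∀ i, f i = g (σ i) := by
  have hfib (c : β) : Fintype.card {a // f a = c} = Fintype.card {a // g a = c} := by
    have := congrArg (Multiset.count c) h
    simp only [Multiset.count_map] at this
    simp only [Fintype.card_subtype, card, filter_val, eq_comm (b := c)]
    exact this
  exact ⟨Equiv.ofFiberEquiv (fun c => Fintype.equivOfCardEq (hfib c)),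
    fun i => (Equiv.ofFiberEquiv_map _ i).symm⟩

theorem prod_X_sub_C_eq_prod_X_sub_C_iff {R ι : Type*} [CommRing R] [IsDomain R] [Fintype ι]
    {f g : ι → R} :
    ∏ i, (X - C (f i)) = ∏ i, (X - C (g i)) ↔ ∃ σ : Equiv.Perm ι, ∀ i, g i = f (σ i) := by
  classical
  constructor
  · intro h
    have hroots (u : ι → R) : (∏ i, (X - C (u i))).roots = univ.val.map u := by
      rw [← roots_multiset_prod_X_sub_C (univ.val.map u), Multiset.map_map]
      rfl
    exact exists_perm_of_map_univ_eq (by rw [← hroots, ← hroots, h])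
  · rintro ⟨σ, hσ⟩
    simp only [hσ]
    exact (Equiv.prod_comp σ fun i => X - C (f i)).symm

noncomputable def descPochhammerSeq : Polynomial.Sequence ℤ where
  elems' := descPochhammer ℤ
  degree_eq' i := by
    rw [degree_eq_natDegree (monic_descPochhammer ℤ i).ne_zero, descPochhammer_natDegree]

theorem eq_of_sum_descPochhammer_eq {n : ℕ} {c d : ℕ → ℤ}
    (h : ∑ k ∈ range (n + 1), C (c k) * descPochhammer ℤ (n - k) =
      ∑ k ∈ range (n + 1), C (d k) * descPochhammer ℤ (n - k)) {k : ℕ} (hk : k ≤ n) :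
    c k = d k := by
  have hzero : ∑ j ∈ range (n + 1), (c (n - j) - d (n - j)) • descPochhammerSeq j = 0 :=
    calc ∑ j ∈ range (n + 1), (c (n - j) - d (n - j)) • descPochhammer ℤ j
        = ∑ j ∈ range (n + 1), (c (n - j) - d (n - j)) • descPochhammer ℤ (n - (n - j)) :=
          sum_congr rfl fun j hj => by rw [Nat.sub_sub_self (mem_range_succ_iff.mp hj)]
      _ = ∑ k ∈ range (n + 1), (c k - d k) • descPochhammer ℤ (n - k) :=
          sum_range_reflect (fun k => (c k - d k) • descPochhammer ℤ (n - k)) (n + 1)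
      _ = 0 := by simp only [sub_smul, sum_sub_distrib, smul_eq_C_mul, h, sub_self]
  have := linearIndependent_iff'.mp descPochhammerSeq.linearIndependent _ _ hzero (n - k)
    (mem_range.mpr (by omega))
  rwa [Nat.sub_sub_self hk, sub_eq_zero] at this

section RookPlacement

variable {n : ℕ} {b : Fin n → ℕ} {P Q : Finset (Fin n × ℕ)}

theorem IsRookPlacement.injOn_fst (hP : IsRookPlacement b P) :
    Set.InjOn Prod.fst (P : Set (Fin n × ℕ)) := fun c hc d hd h =>
  of_not_not fun hne => (hP.2 c hc d hd hne).1 h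

theorem IsRookPlacement.injOn_snd (hP : IsRookPlacement b P) :
    Set.InjOn Prod.snd (P : Set (Fin n × ℕ)) := fun c hc d hd h =>
  of_not_not fun hne => (hP.2 c hc d hd hne).2 h

theorem IsRookPlacement.subset (hP : IsRookPlacement b P) (h : Q ⊆ P) : IsRookPlacement b Q :=
  ⟨fun c hc => hP.1 c (h hc), fun c hc d hd => hP.2 c (h hc) d (h hd)⟩

theorem IsRookPlacement.insert (hP : IsRookPlacement b P) {c : Fin n × ℕ} (hc : c.2 < b c.1)
    (hfree : ∀ d ∈ P, d.1 ≠ c.1 ∧ d.2 ≠ c.2) : IsRookPlacement b (insert c P) := by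
  refine ⟨by simpa [hc] using hP.1, ?_⟩
  simp only [mem_insert]
  rintro d (rfl | hd) e (rfl | he) hne
  · exact absurd rfl hne
  · exact (hfree e he).imp Ne.symm Ne.symm
  · exact hfree d hd
  · exact hP.2 d hd e he hne

theorem IsRookPlacement.card_le (hP : IsRookPlacement b P) : P.card ≤ n := by
  simpa using card_le_card_of_injOn Prod.fst (fun c _ => mem_univ c.1) hP.injOn_fst

open Classical in
noncomputable def rookPlacements (b : Fin n → ℕ) (k : ℕ) : Finset (Finset (Fin n × ℕ)) :=
  (univ ×ˢ range (univ.sup b)).powerset.filter fun P => IsRookPlacement b P ∧ P.card = k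

theorem mem_rookPlacements {k : ℕ} :
    P ∈ rookPlacements b k ↔ IsRookPlacement b P ∧ P.card = k := by
  classical
  simp only [rookPlacements, mem_filter, mem_powerset, and_iff_right_iff_imp]
  rintro ⟨hP, -⟩ c hc
  simpa using (hP.1 c hc).trans_le (le_sup (mem_univ c.1))

theorem rookNum_eq_card_rookPlacements (b : Fin n → ℕ) (k : ℕ) :
    rookNum b k = (rookPlacements b k).card := by
  rw [rookNum, ← Set.ncard_coe_finset]
  congr 1
  ext P
  simp [mem_rookPlacements]

theorem rookNum_zero (b : Fin n → ℕ) : rookNum b 0 = 1 := by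
  rw [rookNum_eq_card_rookPlacements, card_eq_one]
  refine ⟨∅, eq_singleton_iff_unique_mem.mpr ⟨?_, fun P hP => ?_⟩⟩
  · exact mem_rookPlacements.mpr ⟨⟨by simp, by simp⟩, rfl⟩
  · exact card_eq_zero.mp (mem_rookPlacements.mp hP).2

theorem rookNum_eq_zero_of_lt (b : Fin n → ℕ) {k : ℕ} (hk : n < k) : rookNum b k = 0 := by
  rw [rookNum_eq_card_rookPlacements, card_eq_zero, eq_empty_iff_forall_notMem]
  intro P hmem
  obtain ⟨hP, rfl⟩ := mem_rookPlacements.mp hmem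
  exact hk.not_ge hP.card_le

end RookPlacement

section LastColumn

variable {n : ℕ} {b : Fin (n + 1) → ℕ}

def liftCell : Fin n × ℕ ↪ Fin (n + 1) × ℕ := Fin.castSuccEmb.prodMap (Function.Embedding.refl ℕ)

@[simp]
theorem liftCell_apply (c : Fin n × ℕ) : liftCell c = (c.1.castSucc, c.2) := rfl

theorem isRookPlacement_map_liftCell_iff {Q : Finset (Fin n × ℕ)} :
    IsRookPlacement b (Q.map liftCell) ↔ IsRookPlacement (Fin.init b) Q := by
  simp only [IsRookPlacement, forall_mem_map, liftCell_apply, ne_eq, Prod.ext_iff,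
    Fin.castSucc_inj, Fin.init]

theorem exists_map_liftCell_eq {P : Finset (Fin (n + 1) × ℕ)} (h : ∀ c ∈ P, c.1 ≠ Fin.last n) :
    ∃ Q : Finset (Fin n × ℕ), Q.map liftCell = P := by
  classical
  have hsub : (P : Set (Fin (n + 1) × ℕ)) ⊆ liftCell '' Set.univ := fun c hc => by
    obtain ⟨i, hi⟩ := Fin.exists_castSucc_eq.mpr (h c hc)
    exact ⟨(i, c.2), Set.mem_univ _, by simp [hi]⟩
  obtain ⟨Q, -, hQ⟩ := subset_set_image_iff.mp hsub
  exact ⟨Q, by rwa [map_eq_image]⟩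

theorem card_rookPlacements_filter_forall_ne_last (b : Fin (n + 1) → ℕ) (k : ℕ) :
    #{P ∈ rookPlacements b k | ∀ c ∈ P, c.1 ≠ Fin.last n} = rookNum (Fin.init b) k := by
  classical
  rw [rookNum_eq_card_rookPlacements,
    ← card_image_of_injective (rookPlacements (Fin.init b) k) (map_injective liftCell)]
  refine congrArg card (ext fun P => ?_)
  simp only [mem_filter, mem_image, mem_rookPlacements]
  constructor
  · rintro ⟨⟨hP, hcard⟩, hlast⟩
    obtain ⟨Q, rfl⟩ := exists_map_liftCell_eq hlast
    exact ⟨Q, ⟨isRookPlacement_map_liftCell_iff.mp hP, by simpa using hcard⟩, rfl⟩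
  · rintro ⟨Q, ⟨hQ, rfl⟩, rfl⟩
    exact ⟨⟨isRookPlacement_map_liftCell_iff.mpr hQ, card_map _⟩,
      forall_mem_map.mpr fun c _ => Fin.castSucc_ne_last c.1⟩

theorem insert_last_map_liftCell_injective :
    Function.Injective fun x : (_ : Finset (Fin n × ℕ)) × ℕ =>
      insert (Fin.last n, x.2) (x.1.map liftCell) := by
  classical
  rintro ⟨Q₁, j₁⟩ ⟨Q₂, j₂⟩ h
  obtain rfl : j₁ = j₂ := by
    simpa [filter_insert, filter_map, Function.comp_def, Fin.castSucc_ne_last] using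
      congrArg (filter (·.1 = Fin.last n)) h
  obtain rfl : Q₁ = Q₂ := by
    simpa [filter_insert, filter_map, Function.comp_def, Fin.castSucc_ne_last] using
      congrArg (filter (·.1 ≠ Fin.last n)) h
  rfl

def freeRowsOfLast (b : Fin (n + 1) → ℕ) (Q : Finset (Fin n × ℕ)) : Finset ℕ :=
  range (b (Fin.last n)) \ Q.image Prod.snd

theorem natCast_card_freeRowsOfLast (hb : Monotone b) {Q : Finset (Fin n × ℕ)}
    (hQ : IsRookPlacement (Fin.init b) Q) :
    (#(freeRowsOfLast b Q) : ℤ) = b (Fin.last n) - Q.card := by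
  have hrows : Q.image Prod.snd ⊆ range (b (Fin.last n)) := fun j hj => by
    obtain ⟨c, hc, rfl⟩ := mem_image.mp hj
    exact mem_range.mpr ((hQ.1 c hc).trans_le (hb (Fin.le_last _)))
  have hcard : #(Q.image Prod.snd) = Q.card := card_image_of_injOn hQ.injOn_snd
  have hle : Q.card ≤ b (Fin.last n) := by simpa [hcard] using card_le_card hrows
  rw [freeRowsOfLast, card_sdiff_of_subset hrows, card_range, hcard, Nat.cast_sub hle]

theorem insert_last_mem_rookPlacements {k : ℕ} {Q : Finset (Fin n × ℕ)} {j : ℕ}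
    (hmem : Q ∈ rookPlacements (Fin.init b) k) (hj : j ∈ freeRowsOfLast b Q) :
    insert (Fin.last n, j) (Q.map liftCell) ∈ rookPlacements b (k + 1) := by
  obtain ⟨hQ, rfl⟩ := mem_rookPlacements.mp hmem
  rw [freeRowsOfLast, mem_sdiff, mem_range, mem_image] at hj
  have hnotMem : (Fin.last n, j) ∉ Q.map liftCell := by simp [Fin.castSucc_ne_last]
  refine mem_rookPlacements.mpr ⟨(isRookPlacement_map_liftCell_iff.mpr hQ).insert hj.1 ?_, ?_⟩
  · simp only [forall_mem_map, liftCell_apply]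
    exact fun c hc => ⟨Fin.castSucc_ne_last c.1, fun h => hj.2 ⟨c, hc, h⟩⟩
  · rw [card_insert_of_notMem hnotMem, card_map]

theorem exists_insert_last_eq {k : ℕ} {P : Finset (Fin (n + 1) × ℕ)}
    (hmem : P ∈ rookPlacements b (k + 1)) (hlast : ¬∀ c ∈ P, c.1 ≠ Fin.last n) :
    ∃ Q ∈ rookPlacements (Fin.init b) k, ∃ j ∈ freeRowsOfLast b Q,
      insert (Fin.last n, j) (Q.map liftCell) = P := by
  obtain ⟨hP, hcard⟩ := mem_rookPlacements.mp hmem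
  push Not at hlast
  obtain ⟨c₀, hc₀, hc₀last⟩ := hlast
  have hrest : ∀ c ∈ P.erase c₀, c.1 ≠ Fin.last n := fun c hc => by
    rw [mem_erase] at hc
    exact hc₀last ▸ (hP.2 c hc.2 c₀ hc₀ hc.1).1
  obtain ⟨Q, hQ⟩ := exists_map_liftCell_eq hrest
  have hQP : IsRookPlacement b (Q.map liftCell) := hQ ▸ hP.subset (erase_subset _ _)
  refine ⟨Q, mem_rookPlacements.mpr ⟨isRookPlacement_map_liftCell_iff.mp hQP, ?_⟩, c₀.2, ?_, ?_⟩
  · have := card_erase_of_mem hc₀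
    rw [← hQ, card_map] at this
    omega
  · rw [freeRowsOfLast, mem_sdiff, mem_range, mem_image]
    refine ⟨hc₀last ▸ hP.1 c₀ hc₀, ?_⟩
    rintro ⟨c, hc, hrow⟩
    have : liftCell c ∈ P.erase c₀ := hQ ▸ mem_map_of_mem _ hc
    rw [mem_erase] at this
    exact (hP.2 _ this.2 c₀ hc₀ this.1).2 hrow
  · rw [hQ, ← hc₀last, insert_erase hc₀]

theorem natCast_card_rookPlacements_filter_not_forall_ne_last (hb : Monotone b) (k : ℕ) :
    (#{P ∈ rookPlacements b (k + 1) | ¬∀ c ∈ P, c.1 ≠ Fin.last n} : ℤ) =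
      rookNum (Fin.init b) k * ((b (Fin.last n) : ℤ) - k) := by
  classical
  have hfilter : {P ∈ rookPlacements b (k + 1) | ¬∀ c ∈ P, c.1 ≠ Fin.last n} =
      ((rookPlacements (Fin.init b) k).sigma (freeRowsOfLast b)).image
        fun x => insert (Fin.last n, x.2) (x.1.map liftCell) := by
    ext P
    simp only [mem_filter, mem_image, mem_sigma, Sigma.exists]
    constructor
    · rintro ⟨hP, hlast⟩
      obtain ⟨Q, hQ, j, hj, rfl⟩ := exists_insert_last_eq hP hlast
      exact ⟨Q, j, ⟨hQ, hj⟩, rfl⟩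
    · rintro ⟨Q, j, ⟨hQ, hj⟩, rfl⟩
      exact ⟨insert_last_mem_rookPlacements hQ hj, fun h => h _ (mem_insert_self _ _) rfl⟩
  have hfree : ∀ Q ∈ rookPlacements (Fin.init b) k,
      (#(freeRowsOfLast b Q) : ℤ) = b (Fin.last n) - k := fun Q hmem => by
    obtain ⟨hQ, rfl⟩ := mem_rookPlacements.mp hmem
    exact natCast_card_freeRowsOfLast hb hQ
  rw [hfilter, card_image_of_injective _ insert_last_map_liftCell_injective, card_sigma,
    Nat.cast_sum, sum_congr rfl hfree, sum_const, rookNum_eq_card_rookPlacements, nsmul_eq_mul]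

theorem natCast_rookNum_succ (hb : Monotone b) (k : ℕ) :
    (rookNum b (k + 1) : ℤ) =
      rookNum (Fin.init b) (k + 1) + rookNum (Fin.init b) k * ((b (Fin.last n) : ℤ) - k) := by
  classical
  rw [rookNum_eq_card_rookPlacements,
    ← card_filter_add_card_filter_not (p := fun P => ∀ c ∈ P, c.1 ≠ Fin.last n), Nat.cast_add,
    card_rookPlacements_filter_forall_ne_last,
    natCast_card_rookPlacements_filter_not_forall_ne_last hb]

end LastColumn

section FactorialRookPoly

variable {n : ℕ}

noncomputable def factorialRookPoly (b : Fin n → ℕ) : ℤ[X] :=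
  ∑ k ∈ range (n + 1), C (rookNum b k : ℤ) * descPochhammer ℤ (n - k)

theorem factorialRookPoly_succ {b : Fin (n + 1) → ℕ} (hb : Monotone b) :
    factorialRookPoly b = factorialRookPoly (Fin.init b) * (X - C (rootVec b (Fin.last n))) := by
  set r : ℕ → ℤ := fun k => rookNum (Fin.init b) k
  set β : ℤ := (b (Fin.last n) : ℤ)
  have hroot : rootVec b (Fin.last n) = n - β := by simp [rootVec, β]
  have hterm : ∀ k ∈ range (n + 1),
      C (r k) * descPochhammer ℤ (n - k) * (X - C (n - β)) =
        C (r k) * descPochhammer ℤ (n + 1 - k) + C (r k * (β - k)) * descPochhammer ℤ (n - k) := by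
    intro k hk
    have hk : k ≤ n := mem_range_succ_iff.mp hk
    rw [show n + 1 - k = n - k + 1 by omega, descPochhammer_succ_right, Nat.cast_sub hk]
    simp only [map_mul, map_sub, map_natCast]
    ring
  have hshift : ∑ k ∈ range (n + 1), C (r k) * descPochhammer ℤ (n + 1 - k) =
      ∑ k ∈ range (n + 1), C (r (k + 1)) * descPochhammer ℤ (n - k) + descPochhammer ℤ (n + 1) := by
    have hlast : r (n + 1) = 0 := by simp [r, rookNum_eq_zero_of_lt _ n.lt_succ_self]
    rw [← add_zero (∑ k ∈ range (n + 1), _), ← zero_mul (descPochhammer ℤ (n + 1 - (n + 1))),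
      ← C_0, ← hlast, ← sum_range_succ, sum_range_succ']
    simp [r, rookNum_zero]
  calc factorialRookPoly b
      = ∑ k ∈ range (n + 1), C (rookNum b (k + 1) : ℤ) * descPochhammer ℤ (n - k) +
          descPochhammer ℤ (n + 1) := by
        rw [factorialRookPoly, sum_range_succ']
        simp [rookNum_zero]
    _ = ∑ k ∈ range (n + 1), C (r (k + 1)) * descPochhammer ℤ (n - k) +
          ∑ k ∈ range (n + 1), C (r k * (β - k)) * descPochhammer ℤ (n - k) +
          descPochhammer ℤ (n + 1) := by
        simp only [natCast_rookNum_succ hb, map_add, add_mul, sum_add_distrib, r, β]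
    _ = _ := by
        rw [factorialRookPoly, hroot, sum_mul, sum_congr rfl hterm, sum_add_distrib, hshift]
        ring

theorem factorialRookPoly_eq_prod {b : Fin n → ℕ} (hb : Monotone b) :
    factorialRookPoly b = ∏ i, (X - C (rootVec b i)) := by
  induction n with
  | zero => simp [factorialRookPoly, rookNum_zero]
  | succ n ih =>
    rw [factorialRookPoly_succ hb, ih (b := Fin.init b) (hb.comp Fin.strictMono_castSucc.monotone),
      Fin.prod_univ_castSucc]
    rfl

end FactorialRookPoly

theorem rookEquiv_iff_factorialRookPoly_eq {n : ℕ} {b₁ b₂ : Fin n → ℕ} :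
    RookEquiv b₁ b₂ ↔ factorialRookPoly b₁ = factorialRookPoly b₂ := by
  refine ⟨fun h => sum_congr rfl fun k _ => by rw [h k], fun h k => ?_⟩
  by_cases hk : k ≤ n
  · exact_mod_cast eq_of_sum_descPochhammer_eq h hk
  · rw [rookNum_eq_zero_of_lt b₁ (not_le.mp hk), rookNum_eq_zero_of_lt b₂ (not_le.mp hk)]

/-- Goldman–Joichi–White: two Ferrers boards with `n` columns are
rook equivalent if and only if one root vector is a rearrangement of the other. -/
theorem stmt14 {n : ℕ} (b₁ b₂ : Fin n → ℕ) (hb₁ : Monotone b₁) (hb₂ : Monotone b₂) :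
    RookEquiv b₁ b₂ ↔
      ∃ σ : Equiv.Perm (Fin n), ∀ i, rootVec b₂ i = rootVec b₁ (σ i) := by
  rw [rookEquiv_iff_factorialRookPoly_eq, factorialRookPoly_eq_prod hb₁,
    factorialRookPoly_eq_prod hb₂, prod_X_sub_C_eq_prod_X_sub_C_iff]
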